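/- arXiv:1812.01772 — 6 statements merged into one kernel-verified Lean document; each statement's English description precedes it below -/
import Mathlib

section
/- For a partially observed Markov process with Y_n = h(X_n, Z_n), where Z_n is independent noise, and for initial distributions μ ≪ γ, we have E^γ[dμ/dγ(X₀) | Y_{[0,n-1]}, X_n] = E^γ[dμ/dγ(X₀) | Y_{[0,∞)}, X_{[n,∞)}], P^γ-almost surely. -/
open MeasureTheory ProbabilityTheory Filter

set_option linter.unusedSectionVars false

namespace PompAux

variable {Ω : Type*} [m0 : MeasurableSpace Ω] {μ : Measure Ω} [IsProbabilityMeasure μ]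

def interSets (m₁ m₂ : MeasurableSpace Ω) : Set (Set Ω) :=
  {u : Set Ω | ∃ s, MeasurableSet[m₁] s ∧ ∃ b, MeasurableSet[m₂] b ∧ u = s ∩ b}

lemma isPiSystem_interSets (m₁ m₂ : MeasurableSpace Ω) : IsPiSystem (interSets m₁ m₂) := by
  rintro _ ⟨s₁, hs₁, b₁, hb₁, rfl⟩ _ ⟨s₂, hs₂, b₂, hb₂, rfl⟩ _
  exact ⟨s₁ ∩ s₂, hs₁.inter hs₂, b₁ ∩ b₂, hb₁.inter hb₂, by ext x; simp; tauto⟩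

lemma sup_eq_generateFrom_interSets (m₁ m₂ : MeasurableSpace Ω) :
    m₁ ⊔ m₂ = MeasurableSpace.generateFrom (interSets m₁ m₂) := by
  refine le_antisymm (sup_le ?_ ?_) (MeasurableSpace.generateFrom_le ?_)
  · intro s hs
    exact MeasurableSpace.measurableSet_generateFrom ⟨s, hs, Set.univ, MeasurableSet.univ,
      (Set.inter_univ s).symm⟩
  · intro b hb
    exact MeasurableSpace.measurableSet_generateFrom ⟨Set.univ, MeasurableSet.univ, b, hb,
      (Set.univ_inter b).symm⟩
  · rintro _ ⟨s, hs, b, hb, rfl⟩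
    exact ((le_sup_left : m₁ ≤ m₁ ⊔ m₂) s hs).inter ((le_sup_right : m₂ ≤ m₁ ⊔ m₂) b hb)

lemma seteq {m : MeasurableSpace Ω} (hm : m ≤ m0) {π : Set (Set Ω)} (hπ : IsPiSystem π)
    (hgen : m = MeasurableSpace.generateFrom π) {f₁ f₂ : Ω → ℝ}
    (h₁ : Integrable f₁ μ) (h₂ : Integrable f₂ μ)
    (huniv : ∫ x, f₁ x ∂μ = ∫ x, f₂ x ∂μ)
    (hbase : ∀ t ∈ π, ∫ x in t, f₁ x ∂μ = ∫ x in t, f₂ x ∂μ) :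
    ∀ t, MeasurableSet[m] t → ∫ x in t, f₁ x ∂μ = ∫ x in t, f₂ x ∂μ := by
  letI : MeasurableSpace Ω := m0
  intro t ht
  refine MeasurableSpace.induction_on_inter (m := m)
    (C := fun t _ => ∫ x in t, f₁ x ∂μ = ∫ x in t, f₂ x ∂μ) hgen hπ (by simp) hbase ?_ ?_ t ht
  · intro u hu h
    have hu0 : MeasurableSet[m0] u := hm _ hu
    have e₁ := integral_add_compl (μ := μ) hu0 h₁
    have e₂ := integral_add_compl (μ := μ) hu0 h₂
    linarith
  · intro f hdisj hfm hf
    have hfm0 : ∀ i, MeasurableSet[m0] (f i) := fun i => hm _ (hfm i)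
    rw [integral_iUnion (μ := μ) hfm0 hdisj h₁.integrableOn,
      integral_iUnion (μ := μ) hfm0 hdisj h₂.integrableOn]
    exact tsum_congr hf

lemma condExp_sup_of_setIntegral_eq {m' mB : MeasurableSpace Ω} (hm' : m' ≤ m0) (hmB : mB ≤ m0)
    {g : Ω → ℝ} (hg : Integrable g μ)
    (H : ∀ s, MeasurableSet[m'] s → ∀ b, MeasurableSet[mB] b →
      ∫ x in s ∩ b, g x ∂μ = ∫ x in s ∩ b, (μ[g|m']) x ∂μ) :
    μ[g | m' ⊔ mB] =ᵐ[μ] μ[g|m'] := by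
  letI : MeasurableSpace Ω := m0
  have hsup : m' ⊔ mB ≤ m0 := sup_le hm' hmB
  refine (ae_eq_condExp_of_forall_setIntegral_eq hsup hg
    (fun s _ _ => integrable_condExp.integrableOn) ?_
    (((stronglyMeasurable_condExp (m := m') (μ := μ) (f := g)).mono
      (le_sup_left : m' ≤ m' ⊔ mB)).aestronglyMeasurable)).symm
  intro s hs _
  refine seteq hsup (isPiSystem_interSets m' mB) (sup_eq_generateFrom_interSets m' mB)
    integrable_condExp hg ?_ ?_ s hs
  · exact integral_condExp hm'
  · rintro _ ⟨s, hs, b, hb, rfl⟩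
    exact (H s hs b hb).symm


variable {Ω : Type*} [m0 : MeasurableSpace Ω] {μ : Measure Ω} [IsProbabilityMeasure μ]

lemma setbase {A C B : MeasurableSpace Ω} (hA : A ≤ m0) (hC : C ≤ m0) (hB : B ≤ m0)
    (hCI : ∀ a b, MeasurableSet[A] a → MeasurableSet[B] b →
      (μ⟦a ∩ b|C⟧) =ᵐ[μ] (μ⟦a|C⟧) * (μ⟦b|C⟧))
    {b : Set Ω} (hb : MeasurableSet[B] b) :
    ∀ t, MeasurableSet[A ⊔ C] t →
      ∫ x in t, b.indicator (fun _ => (1:ℝ)) x ∂μ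
        = ∫ x in t, (μ[b.indicator (fun _ => (1:ℝ))|C]) x ∂μ := by
  letI : MeasurableSpace Ω := m0
  have hb0 : MeasurableSet[m0] b := hB _ hb
  have hindb : Integrable (b.indicator fun _ => (1:ℝ)) μ := (integrable_const 1).indicator hb0
  refine seteq (sup_le hA hC) (isPiSystem_interSets A C) (sup_eq_generateFrom_interSets A C)
    hindb integrable_condExp (integral_condExp hC).symm ?_
  rintro _ ⟨a, ha, c, hc, rfl⟩
  have ha0 : MeasurableSet[m0] a := hA _ ha
  have hc0 : MeasurableSet[m0] c := hC _ hc
  have hinda : Integrable (a.indicator fun _ => (1:ℝ)) μ := (integrable_const 1).indicator ha0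
  have hindab : Integrable ((a ∩ b).indicator fun _ => (1:ℝ)) μ :=
    (integrable_const 1).indicator (ha0.inter hb0)
  -- LHS
  have L1 : ∫ x in a ∩ c, b.indicator (fun _ => (1:ℝ)) x ∂μ
      = ∫ x in c, (a ∩ b).indicator (fun _ => (1:ℝ)) x ∂μ := by
    rw [setIntegral_indicator hb0, setIntegral_indicator (ha0.inter hb0)]
    rw [show a ∩ c ∩ b = c ∩ (a ∩ b) by ext x; simp; tauto]
  have L2 : ∫ x in c, (a ∩ b).indicator (fun _ => (1:ℝ)) x ∂μ
      = ∫ x in c, (μ⟦a ∩ b|C⟧) x ∂μ := (setIntegral_condExp hC hindab hc).symm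
  have L3 : ∫ x in c, (μ⟦a ∩ b|C⟧) x ∂μ
      = ∫ x in c, ((μ⟦a|C⟧) x * (μ⟦b|C⟧) x) ∂μ := by
    refine integral_congr_ae (ae_restrict_of_ae ?_)
    filter_upwards [hCI a b ha hb] with x hx using hx
  -- RHS
  have R1 : ∫ x in a ∩ c, (μ[b.indicator (fun _ => (1:ℝ))|C]) x ∂μ
      = ∫ x in c, ((μ⟦b|C⟧) x * a.indicator (fun _ => (1:ℝ)) x) ∂μ := by
    rw [show (fun x => (μ⟦b|C⟧) x * a.indicator (fun _ => (1:ℝ)) x)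
        = a.indicator (fun x => (μ⟦b|C⟧) x) by
      funext x; by_cases hx : x ∈ a <;> simp [Set.indicator_of_mem, Set.indicator_of_notMem, hx]]
    rw [setIntegral_indicator ha0, Set.inter_comm a c]
  have hint2 : Integrable (fun x => (μ⟦b|C⟧) x * a.indicator (fun _ => (1:ℝ)) x) μ := by
    refine Integrable.bdd_mul (c := 1) ?_ ?_ ?_
    · exact hinda
    · exact (stronglyMeasurable_condExp.mono hC).aestronglyMeasurable
    · have h0 : 0 ≤ᵐ[μ] (μ⟦b|C⟧) := condExp_nonneg (Eventually.of_forall fun x => by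
        by_cases hx : x ∈ b <;> simp [Set.indicator_of_mem, Set.indicator_of_notMem, hx])
      have h1 : (μ⟦b|C⟧) ≤ᵐ[μ] fun _ => (1:ℝ) := by
        have := condExp_mono (m := C) (μ := μ) hindb (integrable_const 1)
          (Eventually.of_forall fun x => by
            by_cases hx : x ∈ b <;>
              simp [Set.indicator_of_mem, Set.indicator_of_notMem, hx])
        refine this.trans ?_
        rw [condExp_const hC]
      filter_upwards [h0, h1] with x hx0 hx1
      rw [Real.norm_eq_abs, abs_of_nonneg hx0]; exact hx1
  have R2 : ∫ x in c, ((μ⟦b|C⟧) x * a.indicator (fun _ => (1:ℝ)) x) ∂μ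
      = ∫ x in c, (μ[fun x => (μ⟦b|C⟧) x * a.indicator (fun _ => (1:ℝ)) x|C]) x ∂μ :=
    (setIntegral_condExp hC hint2 hc).symm
  have R3 : (μ[fun x => (μ⟦b|C⟧) x * a.indicator (fun _ => (1:ℝ)) x|C])
      =ᵐ[μ] fun x => (μ⟦b|C⟧) x * (μ⟦a|C⟧) x := by
    have := condExp_mul_of_stronglyMeasurable_left (m := C) (μ := μ)
      stronglyMeasurable_condExp hint2 hinda
    exact this
  rw [L1, L2, L3, R1, R2]
  rw [integral_congr_ae (ae_restrict_of_ae (R3.mono fun x hx => hx))]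
  exact integral_congr_ae (ae_restrict_of_ae (Eventually.of_forall fun x => mul_comm _ _))

lemma integral_mul_continuous {w : Ω → ℝ} (hw : AEStronglyMeasurable w μ)
    (hwb : ∀ᵐ x ∂μ, ‖w x‖ ≤ 1) :
    Continuous (fun F : Lp ℝ 1 μ => ∫ x, F x * w x ∂μ) := by
  refine (LipschitzWith.of_dist_le_mul (K := 1) ?_).continuous
  intro F G
  have hFi : Integrable (F : Ω → ℝ) μ := L1.integrable_coeFn F
  have hGi : Integrable (G : Ω → ℝ) μ := L1.integrable_coeFn G
  have hFw : Integrable (fun x => (F : Ω → ℝ) x * w x) μ := by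
    have := hFi.bdd_mul (c := 1) hw hwb
    exact this.congr (Eventually.of_forall fun x => mul_comm _ _)
  have hGw : Integrable (fun x => (G : Ω → ℝ) x * w x) μ := by
    have := hGi.bdd_mul (c := 1) hw hwb
    exact this.congr (Eventually.of_forall fun x => mul_comm _ _)
  rw [NNReal.coe_one, one_mul, Real.dist_eq, ← Real.norm_eq_abs, ← integral_sub hFw hGw]
  have h1 : (fun x => (F : Ω → ℝ) x * w x - (G : Ω → ℝ) x * w x)
      = fun x => ((F : Ω → ℝ) x - (G : Ω → ℝ) x) * w x := by
    funext x; ring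
  rw [h1]
  refine (norm_integral_le_integral_norm _).trans ?_
  have hsub : Integrable (fun x => (F : Ω → ℝ) x - (G : Ω → ℝ) x) μ := hFi.sub hGi
  have hsubw : Integrable (fun x => ((F : Ω → ℝ) x - (G : Ω → ℝ) x) * w x) μ := by
    have := hsub.bdd_mul (c := 1) hw hwb
    exact this.congr (Eventually.of_forall fun x => mul_comm _ _)
  have h3 : ∫ x, ‖((F : Ω → ℝ) x - (G : Ω → ℝ) x) * w x‖ ∂μ
      ≤ ∫ x, ‖(F : Ω → ℝ) x - (G : Ω → ℝ) x‖ ∂μ := by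
    refine integral_mono_ae hsubw.norm hsub.norm ?_
    filter_upwards [hwb] with x hx
    rw [norm_mul]
    calc ‖(F : Ω → ℝ) x - (G : Ω → ℝ) x‖ * ‖w x‖
        ≤ ‖(F : Ω → ℝ) x - (G : Ω → ℝ) x‖ * 1 := by
          exact mul_le_mul_of_nonneg_left hx (norm_nonneg _)
      _ = ‖(F : Ω → ℝ) x - (G : Ω → ℝ) x‖ := mul_one _
  refine h3.trans ?_
  rw [show dist F G = ‖F - G‖ from dist_eq_norm F G, L1.norm_eq_integral_norm (F - G)]
  refine le_of_eq (integral_congr_ae ?_)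
  filter_upwards [Lp.coeFn_sub F G] with x hx
  rw [hx]; rfl

lemma condExp_indicator_ae_bound {C : MeasurableSpace Ω} (hC : C ≤ m0)
    {b : Set Ω} (hb0 : MeasurableSet[m0] b) :
    ∀ᵐ x ∂μ, ‖(μ⟦b|C⟧) x‖ ≤ 1 := by
  letI : MeasurableSpace Ω := m0
  have h0 : 0 ≤ᵐ[μ] (μ⟦b|C⟧) := condExp_nonneg (Eventually.of_forall fun x => by
    by_cases hx : x ∈ b <;> simp [Set.indicator_of_mem, Set.indicator_of_notMem, hx])
  have h1 : (μ⟦b|C⟧) ≤ᵐ[μ] fun _ => (1:ℝ) := by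
    have := condExp_mono (m := C) (μ := μ) ((integrable_const (1:ℝ)).indicator hb0)
      (integrable_const 1)
      (Eventually.of_forall fun x => by
        by_cases hx : x ∈ b <;> simp [Set.indicator_of_mem, Set.indicator_of_notMem, hx])
    refine this.trans ?_
    rw [condExp_const hC]
  filter_upwards [h0, h1] with x hx0 hx1
  rw [Real.norm_eq_abs, abs_of_nonneg hx0]; exact hx1

lemma star {A C B : MeasurableSpace Ω} (hA : A ≤ m0) (hC : C ≤ m0) (hB : B ≤ m0)
    (hCI : ∀ a b, MeasurableSet[A] a → MeasurableSet[B] b →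
      (μ⟦a ∩ b|C⟧) =ᵐ[μ] (μ⟦a|C⟧) * (μ⟦b|C⟧))
    {b : Set Ω} (hb : MeasurableSet[B] b)
    {v : Ω → ℝ} (hv : Integrable v μ) (hvm : StronglyMeasurable[A ⊔ C] v) :
    ∫ x, v x * b.indicator (fun _ => (1:ℝ)) x ∂μ
      = ∫ x, v x * (μ⟦b|C⟧) x ∂μ := by
  letI : MeasurableSpace Ω := m0
  have hAC : A ⊔ C ≤ m0 := sup_le hA hC
  have hb0 : MeasurableSet[m0] b := hB _ hb
  have hw1m : AEStronglyMeasurable (b.indicator fun _ => (1:ℝ)) μ :=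
    ((stronglyMeasurable_const (β := ℝ) (b := 1)).indicator hb0).aestronglyMeasurable
  have hw1b : ∀ᵐ x ∂μ, ‖b.indicator (fun _ => (1:ℝ)) x‖ ≤ 1 := by
    refine Eventually.of_forall fun x => ?_
    by_cases hx : x ∈ b <;>
      simp [Set.indicator_of_mem, Set.indicator_of_notMem, hx]
  have hw2m : AEStronglyMeasurable (μ⟦b|C⟧) μ :=
    (stronglyMeasurable_condExp.mono hC).aestronglyMeasurable
  have hw2b : ∀ᵐ x ∂μ, ‖(μ⟦b|C⟧) x‖ ≤ 1 := condExp_indicator_ae_bound hC hb0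
  refine MemLp.induction_stronglyMeasurable hAC ENNReal.one_ne_top
    (fun v => ∫ x, v x * b.indicator (fun _ => (1:ℝ)) x ∂μ = ∫ x, v x * (μ⟦b|C⟧) x ∂μ)
    ?_ ?_ ?_ ?_ (memLp_one_iff_integrable.mpr hv) hvm.aestronglyMeasurable
  · -- indicators
    intro cc s hs _
    have hs0 : MeasurableSet[m0] s := hAC _ hs
    have key : ∀ w : Ω → ℝ,
        (fun x => (s.indicator (fun _ => cc)) x * w x) = s.indicator (fun x => cc * w x) := by
      intro w; funext x
      by_cases hx : x ∈ s <;>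
        simp [Set.indicator_of_mem, Set.indicator_of_notMem, hx]
    rw [key, key, integral_indicator hs0, integral_indicator hs0,
      integral_const_mul, integral_const_mul]
    have := setbase hA hC hB hCI hb s hs
    rw [this]
  · -- additivity
    intro f g _ hf hg _ _ hPf hPg
    rw [memLp_one_iff_integrable] at hf hg
    have hfw1 : Integrable (fun x => f x * b.indicator (fun _ => (1:ℝ)) x) μ :=
      (hf.bdd_mul (c := 1) hw1m hw1b).congr (Eventually.of_forall fun x => mul_comm _ _)
    have hgw1 : Integrable (fun x => g x * b.indicator (fun _ => (1:ℝ)) x) μ :=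
      (hg.bdd_mul (c := 1) hw1m hw1b).congr (Eventually.of_forall fun x => mul_comm _ _)
    have hfw2 : Integrable (fun x => f x * (μ⟦b|C⟧) x) μ :=
      (hf.bdd_mul (c := 1) hw2m hw2b).congr (Eventually.of_forall fun x => mul_comm _ _)
    have hgw2 : Integrable (fun x => g x * (μ⟦b|C⟧) x) μ :=
      (hg.bdd_mul (c := 1) hw2m hw2b).congr (Eventually.of_forall fun x => mul_comm _ _)
    have e1 : (fun x => (f + g) x * b.indicator (fun _ => (1:ℝ)) x)
        = fun x => f x * b.indicator (fun _ => (1:ℝ)) x + g x * b.indicator (fun _ => (1:ℝ)) x := by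
      funext x; simp [add_mul]
    have e2 : (fun x => (f + g) x * (μ⟦b|C⟧) x)
        = fun x => f x * (μ⟦b|C⟧) x + g x * (μ⟦b|C⟧) x := by
      funext x; simp [add_mul]
    rw [e1, e2, integral_add hfw1 hgw1, integral_add hfw2 hgw2, hPf, hPg]
  · -- closedness
    have c1 := integral_mul_continuous (μ := μ) hw1m hw1b
    have c2 := integral_mul_continuous (μ := μ) hw2m hw2b
    exact isClosed_eq
      (c1.comp (ContinuousLinearMap.continuous (Submodule.subtypeL _)))
      (c2.comp (ContinuousLinearMap.continuous (Submodule.subtypeL _)))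
  · -- ae congruence
    intro f g hfg _ hPf
    have e1 : ∫ x, f x * b.indicator (fun _ => (1:ℝ)) x ∂μ
        = ∫ x, g x * b.indicator (fun _ => (1:ℝ)) x ∂μ := by
      refine integral_congr_ae ?_
      filter_upwards [hfg] with x hx; rw [hx]
    have e2 : ∫ x, f x * (μ⟦b|C⟧) x ∂μ = ∫ x, g x * (μ⟦b|C⟧) x ∂μ := by
      refine integral_congr_ae ?_
      filter_upwards [hfg] with x hx; rw [hx]
    rw [← e1, ← e2]; exact hPf

lemma indicator_inter_mul (s b : Set Ω) (g : Ω → ℝ) (x : Ω) :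
    (s ∩ b).indicator g x
      = (g x * s.indicator (fun _ => (1:ℝ)) x) * b.indicator (fun _ => (1:ℝ)) x := by
  by_cases h1 : x ∈ s <;> by_cases h2 : x ∈ b <;>
    simp [Set.indicator_apply, h1, h2]

lemma indicator_inter_mul' (s b : Set Ω) (g : Ω → ℝ) (x : Ω) :
    (s ∩ b).indicator g x
      = (s.indicator g * b.indicator (fun _ => (1:ℝ))) x := by
  by_cases h1 : x ∈ s <;> by_cases h2 : x ∈ b <;>
    simp [Set.indicator_apply, h1, h2]

lemma markov_step {A C B Fmid : MeasurableSpace Ω}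
    (hA : A ≤ m0) (hC : C ≤ m0) (hB : B ≤ m0)
    (hCmid : C ≤ Fmid) (hmidAC : Fmid ≤ A ⊔ C)
    (hCI : ∀ a b, MeasurableSet[A] a → MeasurableSet[B] b →
      (μ⟦a ∩ b|C⟧) =ᵐ[μ] (μ⟦a|C⟧) * (μ⟦b|C⟧))
    {g : Ω → ℝ} (hg : Integrable g μ) (hgm : StronglyMeasurable[A ⊔ C] g) :
    μ[g | Fmid ⊔ B] =ᵐ[μ] μ[g | Fmid] := by
  letI : MeasurableSpace Ω := m0
  have hAC : A ⊔ C ≤ m0 := sup_le hA hC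
  have hmid0 : Fmid ≤ m0 := hmidAC.trans hAC
  refine condExp_sup_of_setIntegral_eq hmid0 hB hg ?_
  intro s hs b hb
  have hs0 : MeasurableSet[m0] s := hmid0 _ hs
  have hb0 : MeasurableSet[m0] b := hB _ hb
  set w := (μ⟦b|C⟧) with hw
  have hwm : StronglyMeasurable[C] w := stronglyMeasurable_condExp
  have hwb : ∀ᵐ x ∂μ, ‖w x‖ ≤ 1 := condExp_indicator_ae_bound hC hb0
  have h1sm : StronglyMeasurable[Fmid] (s.indicator fun _ => (1:ℝ)) :=
    stronglyMeasurable_const.indicator hs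
  have h1sb : ∀ x, ‖s.indicator (fun _ => (1:ℝ)) x‖ ≤ 1 := fun x => by
    by_cases hx : x ∈ s <;> simp [Set.indicator_of_mem, Set.indicator_of_notMem, hx]
  -- v := g · 1_s
  have hvm : StronglyMeasurable[A ⊔ C] (fun x => g x * s.indicator (fun _ => (1:ℝ)) x) :=
    hgm.mul ((h1sm.mono hmidAC))
  have hvint : Integrable (fun x => g x * s.indicator (fun _ => (1:ℝ)) x) μ :=
    (hg.bdd_mul (c := 1)
      ((h1sm.mono hmid0).aestronglyMeasurable) (Eventually.of_forall h1sb)).congr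
      (Eventually.of_forall fun x => mul_comm _ _)
  -- v' := μ[g|Fmid] · 1_s
  have hv'm : StronglyMeasurable[A ⊔ C]
      (fun x => (μ[g|Fmid]) x * s.indicator (fun _ => (1:ℝ)) x) :=
    (stronglyMeasurable_condExp.mono hmidAC).mul (h1sm.mono hmidAC)
  have hv'int : Integrable (fun x => (μ[g|Fmid]) x * s.indicator (fun _ => (1:ℝ)) x) μ :=
    (integrable_condExp.bdd_mul (c := 1)
      ((h1sm.mono hmid0).aestronglyMeasurable) (Eventually.of_forall h1sb)).congr
      (Eventually.of_forall fun x => mul_comm _ _)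
  -- u := 1_s · w,  Fmid-measurable, bounded
  have hum : StronglyMeasurable[Fmid] (fun x => s.indicator (fun _ => (1:ℝ)) x * w x) :=
    h1sm.mul (hwm.mono hCmid)
  have hub : ∀ᵐ x ∂μ, ‖s.indicator (fun _ => (1:ℝ)) x * w x‖ ≤ 1 := by
    filter_upwards [hwb] with x hx
    rw [norm_mul]
    calc ‖s.indicator (fun _ => (1:ℝ)) x‖ * ‖w x‖ ≤ 1 * 1 :=
      mul_le_mul (h1sb x) hx (norm_nonneg _) zero_le_one
    _ = 1 := mul_one 1
  have hugint : Integrable (fun x => (s.indicator (fun _ => (1:ℝ)) x * w x) * g x) μ := by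
    refine (hg.bdd_mul (c := 1) ?_ hub).congr (Eventually.of_forall fun x => rfl)
    exact (hum.mono hmid0).aestronglyMeasurable
  -- chain of equalities
  have step1 : ∫ x in s ∩ b, g x ∂μ
      = ∫ x, (g x * s.indicator (fun _ => (1:ℝ)) x) * b.indicator (fun _ => (1:ℝ)) x ∂μ := by
    rw [← integral_indicator (hs0.inter hb0)]
    exact integral_congr_ae (Eventually.of_forall fun x => indicator_inter_mul s b _ x)
  have step2 : ∫ x, (g x * s.indicator (fun _ => (1:ℝ)) x) * b.indicator (fun _ => (1:ℝ)) x ∂μ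
      = ∫ x, (g x * s.indicator (fun _ => (1:ℝ)) x) * w x ∂μ :=
    star hA hC hB hCI hb hvint hvm
  have step3 : ∫ x, (g x * s.indicator (fun _ => (1:ℝ)) x) * w x ∂μ
      = ∫ x, (s.indicator (fun _ => (1:ℝ)) x * w x) * g x ∂μ :=
    integral_congr_ae (Eventually.of_forall fun x => by ring)
  have step4 : ∫ x, (s.indicator (fun _ => (1:ℝ)) x * w x) * g x ∂μ
      = ∫ x, (s.indicator (fun _ => (1:ℝ)) x * w x) * (μ[g|Fmid]) x ∂μ := by
    have hpull := condExp_mul_of_stronglyMeasurable_left (μ := μ) hum hugint hg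
    calc ∫ x, (s.indicator (fun _ => (1:ℝ)) x * w x) * g x ∂μ
        = ∫ x, (μ[fun x => (s.indicator (fun _ => (1:ℝ)) x * w x) * g x|Fmid]) x ∂μ :=
          (integral_condExp hmid0).symm
      _ = ∫ x, (s.indicator (fun _ => (1:ℝ)) x * w x) * (μ[g|Fmid]) x ∂μ := by
          refine integral_congr_ae (hpull.mono fun x hx => ?_)
          exact hx
  have step5 : ∫ x, (s.indicator (fun _ => (1:ℝ)) x * w x) * (μ[g|Fmid]) x ∂μ
      = ∫ x, ((μ[g|Fmid]) x * s.indicator (fun _ => (1:ℝ)) x) * w x ∂μ :=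
    integral_congr_ae (Eventually.of_forall fun x => by ring)
  have step6 : ∫ x, ((μ[g|Fmid]) x * s.indicator (fun _ => (1:ℝ)) x) * w x ∂μ
      = ∫ x, ((μ[g|Fmid]) x * s.indicator (fun _ => (1:ℝ)) x)
          * b.indicator (fun _ => (1:ℝ)) x ∂μ :=
    (star hA hC hB hCI hb hv'int hv'm).symm
  have step7 : ∫ x, ((μ[g|Fmid]) x * s.indicator (fun _ => (1:ℝ)) x)
        * b.indicator (fun _ => (1:ℝ)) x ∂μ
      = ∫ x in s ∩ b, (μ[g|Fmid]) x ∂μ := by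
    rw [← integral_indicator (hs0.inter hb0)]
    exact integral_congr_ae (Eventually.of_forall fun x => (indicator_inter_mul s b _ x).symm)
  rw [step1, step2, step3, step4, step5, step6, step7]

lemma indep_step {E mW m' : MeasurableSpace Ω} (hE : E ≤ m0) (hW : mW ≤ m0) (hm'E : m' ≤ E)
    (hInd : Indep E mW μ)
    {g : Ω → ℝ} (hg : Integrable g μ) (hgm : StronglyMeasurable[E] g) :
    μ[g | m' ⊔ mW] =ᵐ[μ] μ[g | m'] := by
  letI : MeasurableSpace Ω := m0
  have hm'0 : m' ≤ m0 := hm'E.trans hE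
  refine condExp_sup_of_setIntegral_eq hm'0 hW hg ?_
  intro s hs b hb
  have hs0 : MeasurableSet[m0] s := hm'0 _ hs
  have hb0 : MeasurableSet[m0] b := hW _ hb
  have key : ∀ u : Ω → ℝ, Integrable u μ → StronglyMeasurable[E] u →
      ∫ x in s ∩ b, u x ∂μ = (∫ x in s, u x ∂μ) * (μ b).toReal := by
    intro u hu hum
    have husm : StronglyMeasurable[E] (s.indicator u) := hum.indicator (hm'E _ hs)
    have husint : Integrable (s.indicator u) μ := hu.indicator hs0
    have hbfm : StronglyMeasurable[mW] (b.indicator fun _ => (1:ℝ)) :=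
      stronglyMeasurable_const.indicator hb
    have hbfint : Integrable (b.indicator fun _ => (1:ℝ)) μ := (integrable_const 1).indicator hb0
    have hIF : IndepFun (s.indicator u) (b.indicator fun _ => (1:ℝ)) μ := by
      rw [IndepFun_iff_Indep]
      refine indep_of_indep_of_le_right (indep_of_indep_of_le_left hInd ?_) ?_
      · exact husm.measurable.comap_le
      · exact hbfm.measurable.comap_le
    have hmul := hIF.integral_mul_eq_mul_integral husint.aestronglyMeasurable hbfint.aestronglyMeasurable
    have e1 : ∫ x in s ∩ b, u x ∂μ
        = ∫ x, (s.indicator u * b.indicator (fun _ => (1:ℝ))) x ∂μ := by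
      rw [← integral_indicator (hs0.inter hb0)]
      exact integral_congr_ae (Eventually.of_forall fun x => indicator_inter_mul' s b _ x)
    rw [e1, integral_congr_ae (Eventually.of_forall fun x => rfl), hmul, integral_indicator hs0, integral_indicator_const (1:ℝ) hb0]
    simp [mul_comm, measureReal_def]
  rw [key g hg hgm, key (μ[g|m']) integrable_condExp
    ((stronglyMeasurable_condExp (m := m')).mono hm'E),
    setIntegral_condExp hm'0 hg hs]

end PompAux

open PompAux

/-- For a POMP where `Y_n = h(X_n, W_n)` with the noise `W_n` independent of the
state process and past measurements, and with the Markov property (past and future conditionally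
independent given `(X_n, Y_n)`), one has
`E^γ[dμ/dγ(X₀) | Y_{[0,n-1]}, X_n] = E^γ[dμ/dγ(X₀) | Y_{[0,∞)}, X_{[n,∞)}]`, `P^γ`-a.s.,
whenever `μ ≪ γ`. -/
theorem predictor_sigma_field_extension
    {Ω 𝒳 𝒴 𝒵 : Type*} {m0 : MeasurableSpace Ω} [StandardBorelSpace Ω]
    [m𝒳 : MeasurableSpace 𝒳] [m𝒴 : MeasurableSpace 𝒴] [m𝒵 : MeasurableSpace 𝒵]
    (Pγ : Measure Ω) [IsProbabilityMeasure Pγ]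
    (X : ℕ → Ω → 𝒳) (Y : ℕ → Ω → 𝒴) (W : ℕ → Ω → 𝒵)
    (hX : ∀ n, Measurable (X n)) (hY : ∀ n, Measurable (Y n)) (hW : ∀ n, Measurable (W n))
    (h : 𝒳 → 𝒵 → 𝒴) (hh : Measurable (Function.uncurry h))
    -- measurement channel structure: `Y_m = h(X_m, W_m)`
    (hchan : ∀ m, Y m = fun ω => h (X m ω) (W m ω))
    -- the i.i.d. noise `W_m` is independent of the state process and of past measurements
    (hnoise : ∀ m : ℕ, IndepFun (W m)
      (fun ω => ((fun i => X i ω), (fun i : Fin m => Y ↑i ω))) Pγ)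
    -- Markov property: past and future are conditionally independent given `(X_m, Y_m)`
    (hMarkov : ∀ m : ℕ, CondIndep (m𝒳.comap (X m) ⊔ m𝒴.comap (Y m))
      (⨆ i : Fin m, (m𝒳.comap (X ↑i) ⊔ m𝒴.comap (Y ↑i)))
      (⨆ i : ℕ, (m𝒳.comap (X (m + 1 + i)) ⊔ m𝒴.comap (Y (m + 1 + i))))
      (sup_le ((hX m).comap_le) ((hY m).comap_le)) Pγ)
    (μ γ : Measure 𝒳) [IsProbabilityMeasure μ] [IsProbabilityMeasure γ]
    (hγ : γ = Pγ.map (X 0)) (hac : μ ≪ γ) (n : ℕ) :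
    Pγ[fun a => (μ.rnDeriv γ (X 0 a)).toReal |
        ((⨆ i : Fin n, m𝒴.comap (Y ↑i)) ⊔ m𝒳.comap (X n))]
      =ᵐ[Pγ]
    Pγ[fun a => (μ.rnDeriv γ (X 0 a)).toReal |
        ((⨆ i : ℕ, m𝒴.comap (Y i)) ⊔ (⨆ i : ℕ, m𝒳.comap (X (n + i))))] := by
  set g : Ω → ℝ := fun a => (μ.rnDeriv γ (X 0 a)).toReal with hgdef
  -- σ-algebras
  set Fsmall : MeasurableSpace Ω := (⨆ i : Fin n, m𝒴.comap (Y ↑i)) ⊔ m𝒳.comap (X n) with hFsmall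
  set Fmid : MeasurableSpace Ω := Fsmall ⊔ m𝒴.comap (Y n) with hFmid
  set A : MeasurableSpace Ω := ⨆ i : Fin n, (m𝒳.comap (X ↑i) ⊔ m𝒴.comap (Y ↑i)) with hA
  set C : MeasurableSpace Ω := m𝒳.comap (X n) ⊔ m𝒴.comap (Y n) with hC
  set B : MeasurableSpace Ω := ⨆ i : ℕ, (m𝒳.comap (X (n + 1 + i)) ⊔ m𝒴.comap (Y (n + 1 + i)))
    with hB
  set Fbig : MeasurableSpace Ω :=
    (⨆ i : ℕ, m𝒴.comap (Y i)) ⊔ (⨆ i : ℕ, m𝒳.comap (X (n + i))) with hFbig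
  letI : MeasurableSpace Ω := m0
  have hA0 : A ≤ m0 := iSup_le fun i => sup_le (hX _).comap_le (hY _).comap_le
  have hC0 : C ≤ m0 := sup_le (hX n).comap_le (hY n).comap_le
  have hB0 : B ≤ m0 := iSup_le fun i => sup_le (hX _).comap_le (hY _).comap_le
  have hFsmall0 : Fsmall ≤ m0 := sup_le (iSup_le fun i => (hY _).comap_le) (hX n).comap_le
  have hFmid0 : Fmid ≤ m0 := sup_le hFsmall0 (hY n).comap_le
  -- integrability and measurability of g
  have hfmeas : Measurable (fun x => (μ.rnDeriv γ x).toReal) :=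
    (Measure.measurable_rnDeriv μ γ).ennreal_toReal
  have hgm : Measurable[m𝒳.comap (X 0)] g :=
    hfmeas.comp (Measurable.of_comap_le le_rfl)
  have hgint : Integrable g Pγ := by
    have h1 : Integrable (fun x => (μ.rnDeriv γ x).toReal) (Pγ.map (X 0)) := by
      rw [← hγ]; exact Measure.integrable_toReal_rnDeriv
    exact (integrable_map_measure hfmeas.aestronglyMeasurable (hX 0).aemeasurable).mp h1
  -- Step A : add Y n to the conditioning σ-algebra using the noise independence
  have hstepA : Pγ[g | Fmid] =ᵐ[Pγ] Pγ[g | Fsmall] := by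
    set E : MeasurableSpace Ω :=
      (⨆ i : ℕ, m𝒳.comap (X i)) ⊔ (⨆ i : Fin n, m𝒴.comap (Y ↑i)) with hE
    letI : MeasurableSpace Ω := m0
    have hE0 : E ≤ m0 := sup_le (iSup_le fun i => (hX _).comap_le)
      (iSup_le fun i => (hY _).comap_le)
    have hX0E : m𝒳.comap (X 0) ≤ E := (le_iSup (fun i : ℕ => m𝒳.comap (X i)) 0).trans le_sup_left
    have hsmallE : Fsmall ≤ E :=
      sup_le le_sup_right ((le_iSup (fun i : ℕ => m𝒳.comap (X i)) n).trans le_sup_left)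
    have hInd : Indep E (m𝒵.comap (W n)) Pγ := by
      have h0 := (IndepFun_iff_Indep _ _ _).mp (hnoise n).symm
      refine indep_of_indep_of_le_left h0 ?_
      refine sup_le (iSup_le fun i => ?_) (iSup_le fun i => ?_)
      · have hproj : Measurable (fun p : (ℕ → 𝒳) × (Fin n → 𝒴) => p.1 i) :=
          (measurable_pi_apply i).comp measurable_fst
        calc m𝒳.comap (X i)
            = (m𝒳.comap (fun p : (ℕ → 𝒳) × (Fin n → 𝒴) => p.1 i)).comap
              (fun ω => ((fun j => X j ω), (fun j : Fin n => Y ↑j ω))) :=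
              (MeasurableSpace.comap_comp (m := m𝒳)
                (f := fun p : (ℕ → 𝒳) × (Fin n → 𝒴) => p.1 i)
                (g := fun ω => ((fun j => X j ω), (fun j : Fin n => Y ↑j ω)))).symm
          _ ≤ _ := MeasurableSpace.comap_mono hproj.comap_le
      · have hproj : Measurable (fun p : (ℕ → 𝒳) × (Fin n → 𝒴) => p.2 i) :=
          (measurable_pi_apply i).comp measurable_snd
        calc m𝒴.comap (Y ↑i)
            = (m𝒴.comap (fun p : (ℕ → 𝒳) × (Fin n → 𝒴) => p.2 i)).comap
              (fun ω => ((fun j => X j ω), (fun j : Fin n => Y ↑j ω))) :=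
              (MeasurableSpace.comap_comp (m := m𝒴)
                (f := fun p : (ℕ → 𝒳) × (Fin n → 𝒴) => p.2 i)
                (g := fun ω => ((fun j => X j ω), (fun j : Fin n => Y ↑j ω)))).symm
          _ ≤ _ := MeasurableSpace.comap_mono hproj.comap_le
    have hgmE : StronglyMeasurable[E] g := ((hgm.mono hX0E le_rfl)).stronglyMeasurable
    have hYn : m𝒴.comap (Y n) ≤ m𝒳.comap (X n) ⊔ m𝒵.comap (W n) := by
      have hp : Measurable[m𝒳.comap (X n) ⊔ m𝒵.comap (W n)] (fun ω => (X n ω, W n ω)) :=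
        Measurable.prod (Measurable.of_comap_le le_sup_left)
          (Measurable.of_comap_le le_sup_right)
      have hmeas : Measurable[m𝒳.comap (X n) ⊔ m𝒵.comap (W n)] (Y n) := by
        rw [hchan n]
        exact hh.comp hp
      exact hmeas.comap_le
    have htop := indep_step (μ := Pγ) hE0 (hW n).comap_le hsmallE hInd hgint hgmE
    have hmidtop : Fmid ≤ Fsmall ⊔ m𝒵.comap (W n) := by
      refine sup_le le_sup_left (hYn.trans (sup_le ?_ le_sup_right))
      exact (le_sup_right.trans (le_sup_left : Fsmall ≤ Fsmall ⊔ m𝒵.comap (W n)))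
    have htower :
        Pγ[Pγ[g | Fsmall ⊔ m𝒵.comap (W n)] | Fmid] =ᵐ[Pγ] Pγ[g | Fmid] :=
      condExp_condExp_of_le hmidtop (sup_le hFsmall0 (hW n).comap_le)
    calc Pγ[g | Fmid]
        =ᵐ[Pγ] Pγ[Pγ[g | Fsmall ⊔ m𝒵.comap (W n)] | Fmid] := htower.symm
      _ =ᵐ[Pγ] Pγ[Pγ[g | Fsmall] | Fmid] := condExp_congr_ae htop
      _ =ᵐ[Pγ] Pγ[g | Fsmall] := Filter.EventuallyEq.of_eq
          (condExp_of_stronglyMeasurable hFmid0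
            (stronglyMeasurable_condExp.mono le_sup_left) integrable_condExp)
  -- Step B : Markov property
  have hCmid : C ≤ Fmid := sup_le (le_sup_right.trans le_sup_left) le_sup_right
  have hmidAC : Fmid ≤ A ⊔ C := by
    refine sup_le (sup_le ?_ ?_) ?_
    · exact (iSup_mono fun i => le_sup_right).trans le_sup_left
    · exact le_sup_left.trans le_sup_right
    · exact le_sup_right.trans le_sup_right
  have hX0AC : m𝒳.comap (X 0) ≤ A ⊔ C := by
    cases n with
    | zero => exact (le_sup_left : m𝒳.comap (X 0) ≤ C).trans le_sup_right
    | succ k =>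
      refine le_trans ?_ (le_sup_left : A ≤ A ⊔ C)
      exact le_trans (le_sup_left : m𝒳.comap (X 0) ≤ _)
        (le_iSup (fun i : Fin (k+1) => m𝒳.comap (X ↑i) ⊔ m𝒴.comap (Y ↑i)) ⟨0, Nat.succ_pos k⟩)
  have hgmAC : StronglyMeasurable[A ⊔ C] g := ((hgm.mono hX0AC le_rfl)).stronglyMeasurable
  have hCI : ∀ a b, MeasurableSet[A] a → MeasurableSet[B] b →
      (Pγ⟦a ∩ b|C⟧) =ᵐ[Pγ] (Pγ⟦a|C⟧) * (Pγ⟦b|C⟧) := by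
    have := (condIndep_iff C A B hC0 hA0 hB0 Pγ).mp (hMarkov n)
    exact fun a b ha hb => this a b ha hb
  have hstepB : Pγ[g | Fmid ⊔ B] =ᵐ[Pγ] Pγ[g | Fmid] :=
    markov_step (μ := Pγ) hA0 hC0 hB0 hCmid hmidAC hCI hgint hgmAC
  -- identify Fbig with Fmid ⊔ B
  have hEQ : Fbig = Fmid ⊔ B := by
    have hYsplit : (⨆ i : ℕ, m𝒴.comap (Y i))
        = ((⨆ i : Fin n, m𝒴.comap (Y ↑i)) ⊔ m𝒴.comap (Y n))
          ⊔ ⨆ i : ℕ, m𝒴.comap (Y (n + 1 + i)) := by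
      refine le_antisymm (iSup_le fun i => ?_) ?_
      · rcases lt_trichotomy i n with hi | hi | hi
        · exact le_sup_left.trans'
            (le_sup_left.trans' (le_iSup (fun j : Fin n => m𝒴.comap (Y ↑j)) ⟨i, hi⟩))
        · subst hi; exact le_sup_left.trans' le_sup_right
        · have hrw : n + 1 + (i - (n + 1)) = i := by omega
          refine le_sup_right.trans' ?_
          have := le_iSup (fun k : ℕ => m𝒴.comap (Y (n + 1 + k))) (i - (n + 1))
          rwa [hrw] at this
      · refine sup_le (sup_le (iSup_le fun j => le_iSup (fun i : ℕ => m𝒴.comap (Y i)) ↑j)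
          (le_iSup (fun i : ℕ => m𝒴.comap (Y i)) n)) (iSup_le fun k =>
            le_iSup (fun i : ℕ => m𝒴.comap (Y i)) (n + 1 + k))
    have hXsplit : (⨆ i : ℕ, m𝒳.comap (X (n + i)))
        = m𝒳.comap (X n) ⊔ ⨆ i : ℕ, m𝒳.comap (X (n + 1 + i)) := by
      refine le_antisymm (iSup_le fun i => ?_) ?_
      · cases i with
        | zero => exact le_sup_left
        | succ k =>
          have hrw : n + 1 + k = n + (k + 1) := by omega
          refine le_sup_right.trans' ?_
          have := le_iSup (fun j : ℕ => m𝒳.comap (X (n + 1 + j))) k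
          rwa [hrw] at this
      · refine sup_le ?_ (iSup_le fun k => ?_)
        · exact le_iSup (fun i : ℕ => m𝒳.comap (X (n + i))) 0
        · have hrw : n + (1 + k) = n + 1 + k := by omega
          have := le_iSup (fun i : ℕ => m𝒳.comap (X (n + i))) (1 + k)
          rwa [hrw] at this
    have hBsplit : B = (⨆ i : ℕ, m𝒳.comap (X (n + 1 + i)))
        ⊔ ⨆ i : ℕ, m𝒴.comap (Y (n + 1 + i)) := iSup_sup_eq
    rw [hFbig, hYsplit, hXsplit, hFmid, hFsmall, hBsplit]
    simp only [sup_assoc, sup_comm, sup_left_comm]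
  rw [hEQ]
  exact hstepA.symm.trans hstepB.symm
end

section
/- Let P and Q be joint probability laws of a pair of random variables (X, Y) with P ≪ Q. Then the relative entropy decomposes as D(P(X,Y)‖Q(X,Y)) = D(P(Y)‖Q(Y)) + D(P(X|Y)‖Q(X|Y)), where the conditional relative entropy is the P-expectation of D(P(X|Y=y)‖Q(X|Y=y)). -/
open MeasureTheory ProbabilityTheory Filter
open scoped ENNReal

/-- Kullback–Leibler divergence `D(P‖Q) = ∫ log (dP/dQ) dP`, with value `∞` when `P` is not
absolutely continuous w.r.t. `Q` or the integral does not exist. -/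
noncomputable def klDiv {α : Type*} [MeasurableSpace α] (P Q : Measure α) : ℝ≥0∞ :=
  open scoped Classical in
  if P ≪ Q ∧ Integrable (fun x => Real.log (P.rnDeriv Q x).toReal) P then
    ENNReal.ofReal (∫ x, Real.log (P.rnDeriv Q x).toReal ∂P)
  else ⊤

/-!
Disintegrate `P = P_Y ⊗ P(X|Y)` and `Q = Q_Y ⊗ Q(X|Y)`. Mathlib's chain rule
`InformationTheory.klDiv_compProd_eq_add` splits `D(P‖Q)` into `D(P_Y‖Q_Y)` plus
`D(P_Y ⊗ P(X|Y) ‖ P_Y ⊗ Q(X|Y))`, and the latter is the `P_Y`-average of the fibrewise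
divergences: written as the f-divergence `∫⁻ klFun (dμ/dν) dν` with `klFun ≥ 0`, and with the
Radon–Nikodym derivative of the compound measures given by the jointly measurable kernel
Radon–Nikodym derivative (`𝒳` is countably generated), it is a Tonelli computation with no
integrability side conditions.
-/

/-- The correction term `ν(univ) - μ(univ)` in Mathlib's divergence vanishes here. -/
lemma klDiv_eq_informationTheory_klDiv {α : Type*} [MeasurableSpace α] {μ ν : Measure α}
    (h : μ Set.univ = ν Set.univ) : klDiv μ ν = InformationTheory.klDiv μ ν := by
  rw [klDiv]
  split_ifs with hac
  · rw [InformationTheory.klDiv_of_ac_of_integrable hac.1 hac.2, Measure.real, Measure.real, h,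
      add_sub_cancel_right]
    rfl
  · exact (InformationTheory.klDiv_eq_top_iff.mpr fun h₁ h₂ => hac ⟨h₁, h₂⟩).symm

section CompProdRight

variable {α β : Type*} {mα : MeasurableSpace α} {mβ : MeasurableSpace β}
  [MeasurableSpace.CountableOrCountablyGenerated α β]
  {μ : Measure α} {κ η : Kernel α β} [IsFiniteMeasure μ] [IsFiniteKernel κ] [IsFiniteKernel η]

lemma ProbabilityTheory.rnDeriv_measure_compProd_right (h : ∀ᵐ a ∂μ, κ a ≪ η a) :
    (μ ⊗ₘ κ).rnDeriv (μ ⊗ₘ η) =ᵐ[μ ⊗ₘ η] fun p ↦ κ.rnDeriv η p.1 p.2 := by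
  have h_eq : μ ⊗ₘ κ = (μ ⊗ₘ η).withDensity (fun p ↦ κ.rnDeriv η p.1 p.2) := by
    rw [← Measure.compProd_withDensity (Kernel.measurable_rnDeriv κ η)]
    exact Measure.compProd_congr (h.mono fun a ha ↦ (Kernel.withDensity_rnDeriv_eq ha).symm)
  rw [h_eq]
  exact Measure.rnDeriv_withDensity _ (Kernel.measurable_rnDeriv κ η)

lemma InformationTheory.klDiv_compProd_right :
    klDiv (μ ⊗ₘ κ) (μ ⊗ₘ η) = ∫⁻ a, klDiv (κ a) (η a) ∂μ := by
  by_cases hac : ∀ᵐ a ∂μ, κ a ≪ η a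
  · rw [klDiv_eq_lintegral_klFun_of_ac (Measure.absolutelyContinuous_compProd_right_iff.mpr hac)]
    calc ∫⁻ p, ENNReal.ofReal (klFun ((μ ⊗ₘ κ).rnDeriv (μ ⊗ₘ η) p).toReal) ∂μ ⊗ₘ η
      _ = ∫⁻ p, ENNReal.ofReal (klFun (κ.rnDeriv η p.1 p.2).toReal) ∂μ ⊗ₘ η := by
        refine lintegral_congr_ae ?_
        filter_upwards [rnDeriv_measure_compProd_right hac] with p hp
        rw [hp]
      _ = ∫⁻ a, ∫⁻ b, ENNReal.ofReal (klFun (κ.rnDeriv η a b).toReal) ∂η a ∂μ :=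
        Measure.lintegral_compProd (by fun_prop)
      _ = ∫⁻ a, klDiv (κ a) (η a) ∂μ := by
        refine lintegral_congr_ae ?_
        filter_upwards [hac] with a ha
        rw [klDiv_eq_lintegral_klFun_of_ac ha]
        refine lintegral_congr_ae ?_
        filter_upwards [Kernel.rnDeriv_eq_rnDeriv_measure (κ := κ) (η := η) (a := a)] with b hb
        rw [hb]
  · have h_singular : μ {a | κ a ≪ η a}ᶜ ≠ 0 := hac
    rw [klDiv_of_not_ac (mt Measure.absolutelyContinuous_compProd_right_iff.mp hac), eq_comm,
      eq_top_iff]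
    calc ∞ = ∫⁻ a, {a | κ a ≪ η a}ᶜ.indicator (fun _ ↦ ∞) a ∂μ := by
          rw [lintegral_indicator_const (Kernel.measurableSet_absolutelyContinuous κ η).compl,
            ENNReal.top_mul h_singular]
      _ ≤ ∫⁻ a, klDiv (κ a) (η a) ∂μ :=
        lintegral_mono (Set.indicator_le fun a ha ↦ (klDiv_of_not_ac ha).ge)

end CompProdRight

theorem klDiv_chain_rule_general
    {𝒴 𝒳 : Type*} [MeasurableSpace 𝒴] [MeasurableSpace 𝒳]
    [StandardBorelSpace 𝒳] [Nonempty 𝒳]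
    (P Q : Measure (𝒴 × 𝒳)) [IsProbabilityMeasure P] [IsProbabilityMeasure Q] :
    klDiv P Q = klDiv P.fst Q.fst +
      ∫⁻ y, klDiv (P.condKernel y) (Q.condKernel y) ∂P.fst := by
  have h_cond (y : 𝒴) : klDiv (P.condKernel y) (Q.condKernel y) =
      InformationTheory.klDiv (P.condKernel y) (Q.condKernel y) :=
    klDiv_eq_informationTheory_klDiv (by simp)
  simp_rw [h_cond, klDiv_eq_informationTheory_klDiv (μ := P) (ν := Q) (by simp),
    klDiv_eq_informationTheory_klDiv (μ := P.fst) (ν := Q.fst) (by simp),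
    ← InformationTheory.klDiv_compProd_right]
  conv_lhs => rw [← P.disintegrate P.condKernel, ← Q.disintegrate Q.condKernel]
  exact InformationTheory.klDiv_compProd_eq_add _ _ _ _

/-- Chain rule for relative entropy: for joint laws `P ≪ Q` of a pair `(Y, X)`,
`D(P(X,Y)‖Q(X,Y)) = D(P(Y)‖Q(Y)) + E_{P(Y)}[D(P(X|Y=y)‖Q(X|Y=y))]`, where the conditional laws
are given by disintegration. -/
theorem klDiv_chain_rule
    {𝒴 𝒳 : Type*} [MeasurableSpace 𝒴] [MeasurableSpace 𝒳]
    [StandardBorelSpace 𝒳] [Nonempty 𝒳]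
    (P Q : Measure (𝒴 × 𝒳)) [IsProbabilityMeasure P] [IsProbabilityMeasure Q]
    (hPQ : P ≪ Q) :
    klDiv P Q = klDiv P.fst Q.fst +
      ∫⁻ y, klDiv (P.condKernel y) (Q.condKernel y) ∂P.fst :=
  klDiv_chain_rule_general P Q
end

section
/- Consider a finite POMP with |𝒳| = n states, transition matrix T, and one-step observation matrix A whose j-th row is the distribution of Y given X = a_j. If the n × nK matrix M = [A, TA, T²A, …, T^{n−1}A] has rank n, then the system is n-step observable: every function f : 𝒳 → ℝ can be written as f(x) = ∫ g(y_{[1,n]}) P(dy_{[1,n]}|X₁ = x) for some bounded g of the additively separable form g(y_{[1,n]}) = Σ_i g_i(y_i). Moreover, appending further blocks T^k A for k ≥ n does not increase the rank of M. -/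
/-!
Summing out the observations other than `Yᵢ`, and then the states after time `i`, uses only that
`A` and `T` are row-stochastic and leaves `(T^{i-1} A)(x, ·)` as the law of `Yᵢ` given `X₁ = x`.
Hence an additively separable `g = ∑ gᵢ` integrates to `(M v)(x)` where `v` stacks the `gᵢ`, and
when `M` has full row rank `v ↦ M v` is onto. For the second claim, Cayley–Hamilton puts every
power `T^k` in the span of `I, T, …, T^{n-1}`, so the columns of `T^k A` already lie in the column
span of `M`.
-/

open Finset

/-- The matrix `[A, TA, T²A, …, T^{m-1}A]` of marginal observation distributions,
as an `s × (m K)` matrix. -/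
noncomputable def bigM {s K : ℕ} (T : Matrix (Fin s) (Fin s) ℝ)
    (A : Matrix (Fin s) (Fin K) ℝ) (m : ℕ) : Matrix (Fin s) (Fin m × Fin K) ℝ :=
  Matrix.of fun i p => ((T ^ (p.1 : ℕ)) * A) i p.2

/-- The joint law of the observations `Y₁, …, Y_s` given `X₁ = x`, for the POMP with transition
matrix `T` and observation matrix `A`: a sum over state paths starting at `x`. -/
noncomputable def jointObs {s K : ℕ} (hs : 0 < s) (T : Matrix (Fin s) (Fin s) ℝ)
    (A : Matrix (Fin s) (Fin K) ℝ) (x : Fin s) (y : Fin s → Fin K) : ℝ :=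
  ∑ p : Fin s → Fin s,
    (if p ⟨0, hs⟩ = x then (1 : ℝ) else 0) *
      (∏ i : Fin s, A (p i) (y i)) *
      (∏ i : Fin (s - 1),
        T (p (Fin.castLE (Nat.sub_le s 1) i)) (p ⟨i.1 + 1, by have := i.2; omega⟩))

namespace Matrix

theorem pow_mem_span_pow_lt_card {n R : Type*} [Fintype n] [DecidableEq n] [CommRing R]
    [Nontrivial R] (M : Matrix n n R) (k : ℕ) :
    M ^ k ∈ Submodule.span R (Set.range fun i : Fin (Fintype.card n) => M ^ (i : ℕ)) :=
  PowerBasis.mem_span_pow'.2 ⟨_, (Polynomial.degree_modByMonic_lt _ M.charpoly_monic).trans_eq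
    M.charpoly_degree_eq_dim, M.pow_eq_aeval_mod_charpoly k⟩

theorem mulVec_mem_span_image {n R : Type*} [Fintype n] [DecidableEq n] [CommSemiring R]
    {M : Matrix n n R} {S : Set (Matrix n n R)} (hM : M ∈ Submodule.span R S) (v : n → R) :
    M *ᵥ v ∈ Submodule.span R ((· *ᵥ v) '' S) :=
  Submodule.apply_mem_span_image_of_mem_span (LinearMap.applyₗ v ∘ₗ toLin'.toLinearMap) hM

theorem mulVec_surjective_of_rank_eq_card {m n 𝕜 : Type*} [Fintype m] [Fintype n]
    [Field 𝕜] (M : Matrix m n 𝕜) (h : M.rank = Fintype.card m) : Function.Surjective M.mulVec :=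
  LinearMap.range_eq_top.1 <| Submodule.eq_top_of_finrank_eq <|
    h.trans (Module.finrank_fintype_fun_eq_card 𝕜).symm

end Matrix

section MarkovChain

open Matrix

variable {σ R : Type*} [CommSemiring R]

def pathWeight (T : Matrix σ σ R) {m : ℕ} (p : Fin (m + 1) → σ) : R :=
  ∏ j : Fin m, T (p j.castSucc) (p j.succ)

theorem pathWeight_cons (T : Matrix σ σ R) {m : ℕ} (a : σ) (p : Fin (m + 1) → σ) :
    pathWeight T (vecCons a p) = T a (p 0) * pathWeight T p := by
  simp [pathWeight, Fin.prod_univ_succ]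

theorem Fintype.sum_pi_fin_succ [Fintype σ] {m : ℕ} (F : (Fin (m + 1) → σ) → R) :
    ∑ p, F p = ∑ a, ∑ q : Fin m → σ, F (vecCons a q) := by
  rw [← (Fin.consEquiv fun _ => σ).sum_comp, Fintype.sum_prod_type]
  rfl

theorem sum_pathWeight_mul_apply [Fintype σ] [DecidableEq σ] (T : Matrix σ σ R)
    (hT : ∀ a, ∑ b, T a b = 1) :
    ∀ {m i : ℕ} (hi : i ≤ m) (h : σ → R) (x : σ),
      ∑ q : Fin m → σ, pathWeight T (vecCons x q) * h (vecCons x q ⟨i, by omega⟩)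
        = (T ^ i *ᵥ h) x := by
  intro m
  induction m with
  | zero =>
    intro i hi h x
    obtain rfl : i = 0 := by omega
    simp [pathWeight]
  | succ m ih =>
    intro i hi h x
    simp_rw [Fintype.sum_pi_fin_succ, pathWeight_cons, cons_val_zero, mul_assoc,
      ← mul_sum]
    rcases i with _ | i
    · have hmass : ∀ z, ∑ q : Fin m → σ, pathWeight T (vecCons z q) = 1 := fun z => by
        simpa using ih (Nat.zero_le m) (fun _ => 1) z
      simp [hmass, ← sum_mul, hT]
    · simp only [cons_val_succ', ih (by omega : i ≤ m)]
      rw [pow_succ', ← mulVec_mulVec]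
      rfl

theorem sum_mul_prod_eq_mulVec_apply {ι κ : Type*} [Fintype ι] [DecidableEq ι] [Fintype κ]
    (A : Matrix σ κ R) (hA : ∀ a, ∑ k, A a k = 1) (p : ι → σ) (i : ι) (g : κ → R) :
    ∑ y : ι → κ, g (y i) * ∏ j, A (p j) (y j) = (A *ᵥ g) (p i) := by
  let φ : ι → κ → R := fun j k => A (p j) k * if j = i then g k else 1
  calc ∑ y : ι → κ, g (y i) * ∏ j, A (p j) (y j)
      = ∑ y : ι → κ, ∏ j, φ j (y j) := by
        refine sum_congr rfl fun y _ => ?_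
        rw [prod_mul_distrib, prod_ite_eq']
        simp [mul_comm]
    _ = ∏ j, ∑ k, φ j k := (Fintype.prod_sum φ).symm
    _ = ∑ k, φ i k := Fintype.prod_eq_single i fun j hj => by simp [φ, hj, hA]
    _ = (A *ᵥ g) (p i) := by simp [φ, mulVec, dotProduct]

end MarkovChain

open Matrix

theorem sum_mul_jointObs {s K : ℕ} (hs : 0 < s) (T : Matrix (Fin s) (Fin s) ℝ)
    (A : Matrix (Fin s) (Fin K) ℝ) (hTrow : ∀ i, ∑ j, T i j = 1) (hArow : ∀ i, ∑ k, A i k = 1)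
    (x : Fin s) (i : Fin s) (g : Fin K → ℝ) :
    ∑ y : Fin s → Fin K, g (y i) * jointObs hs T A x y = ((T ^ (i : ℕ) * A) *ᵥ g) x := by
  obtain ⟨m, rfl⟩ : ∃ m, s = m + 1 := ⟨s - 1, by omega⟩
  have hjoint : ∀ y, jointObs hs T A x y = ∑ p : Fin (m + 1) → Fin (m + 1),
      (if p 0 = x then 1 else 0) * (∏ j, A (p j) (y j)) * pathWeight T p := fun _ => rfl
  calc ∑ y : Fin (m + 1) → Fin K, g (y i) * jointObs hs T A x y
      = ∑ p : Fin (m + 1) → Fin (m + 1), (if p 0 = x then 1 else 0) * pathWeight T p *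
          ∑ y : Fin (m + 1) → Fin K, g (y i) * ∏ j, A (p j) (y j) := by
        simp_rw [hjoint, mul_sum]
        rw [sum_comm]
        refine sum_congr rfl fun p _ => sum_congr rfl fun y _ => by ring
    _ = ∑ q : Fin m → Fin (m + 1), pathWeight T (vecCons x q) * (A *ᵥ g) (vecCons x q i) := by
        simp_rw [sum_mul_prod_eq_mulVec_apply A hArow]
        rw [Fintype.sum_pi_fin_succ, Fintype.sum_eq_single x fun a ha => by simp [ha]]
        simp
    _ = ((T ^ (i : ℕ) * A) *ᵥ g) x := by
        rw [← mulVec_mulVec]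
        exact sum_pathWeight_mul_apply T hTrow (Nat.le_of_lt_succ i.2) _ x

theorem bigM_mulVec_apply {s K : ℕ} (T : Matrix (Fin s) (Fin s) ℝ) (A : Matrix (Fin s) (Fin K) ℝ)
    (m : ℕ) (v : Fin m × Fin K → ℝ) (x : Fin s) :
    (bigM T A m *ᵥ v) x = ∑ i : Fin m, ((T ^ (i : ℕ) * A) *ᵥ fun k => v (i, k)) x := by
  simp [mulVec, dotProduct, Fintype.sum_prod_type, bigM]

theorem bigM_col_apply {s K : ℕ} (T : Matrix (Fin s) (Fin s) ℝ) (A : Matrix (Fin s) (Fin K) ℝ)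
    {m : ℕ} (j : Fin m) (k : Fin K) : (bigM T A m).col (j, k) = T ^ (j : ℕ) *ᵥ A.col k := by
  ext z
  simp [bigM, mulVec, dotProduct, mul_apply]

theorem bigM_rank_eq_of_le {s K : ℕ} (T : Matrix (Fin s) (Fin s) ℝ) (A : Matrix (Fin s) (Fin K) ℝ)
    {m : ℕ} (hm : s ≤ m) : (bigM T A m).rank = (bigM T A s).rank := by
  suffices Submodule.span ℝ (Set.range (bigM T A m).col) =
      Submodule.span ℝ (Set.range (bigM T A s).col) by
    rw [rank_eq_finrank_span_cols, rank_eq_finrank_span_cols, this]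
  refine le_antisymm (Submodule.span_le.2 ?_) (Submodule.span_mono ?_)
  · rintro _ ⟨⟨j, k⟩, rfl⟩
    have hspan := mulVec_mem_span_image (T.pow_mem_span_pow_lt_card j) (A.col k)
    rw [← Set.range_comp] at hspan
    rw [SetLike.mem_coe, bigM_col_apply]
    refine Submodule.span_mono ?_ hspan
    rintro _ ⟨i, rfl⟩
    exact ⟨(Fin.cast (Fintype.card_fin s) i, k), bigM_col_apply T A _ k⟩
  · rintro _ ⟨⟨j, k⟩, rfl⟩
    exact ⟨(Fin.castLE hm j, k), rfl⟩

theorem finite_state_observability_general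
    {s K : ℕ} (hs : 0 < s)
    (T : Matrix (Fin s) (Fin s) ℝ) (A : Matrix (Fin s) (Fin K) ℝ)
    (hTrow : ∀ i, ∑ j, T i j = 1) (hArow : ∀ i, ∑ k, A i k = 1) :
    ((bigM T A s).rank = s →
      ∀ f : Fin s → ℝ, ∃ gi : Fin s → Fin K → ℝ,
        ∀ x : Fin s,
          f x = ∑ y : Fin s → Fin K, (∑ i, gi i (y i)) * jointObs hs T A x y) ∧
    (∀ m : ℕ, s ≤ m → (bigM T A m).rank = (bigM T A s).rank) := by
  refine ⟨fun hrank f => ?_, fun m hm => bigM_rank_eq_of_le T A hm⟩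
  obtain ⟨v, hv⟩ := (bigM T A s).mulVec_surjective_of_rank_eq_card (by simpa using hrank) f
  refine ⟨fun i k => v (i, k), fun x => ?_⟩
  calc f x = ∑ i : Fin s, ((T ^ (i : ℕ) * A) *ᵥ fun k => v (i, k)) x := by
        rw [← hv, bigM_mulVec_apply]
    _ = ∑ i, ∑ y : Fin s → Fin K, v (i, y i) * jointObs hs T A x y :=
        sum_congr rfl fun i _ => (sum_mul_jointObs hs T A hTrow hArow x i _).symm
    _ = ∑ y : Fin s → Fin K, (∑ i, v (i, y i)) * jointObs hs T A x y := by
        simp_rw [sum_mul]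
        exact sum_comm

/-- For a finite POMP with `s` states, transition matrix `T` and observation
matrix `A` (both row-stochastic): if `M = [A, TA, …, T^{s-1}A]` has rank `s`, then the system is
`s`-step observable with additively separable `g`; moreover appending further blocks `T^k A`
never increases the rank of `M` (Cayley–Hamilton). -/
theorem finite_state_observability
    {s K : ℕ} (hs : 0 < s)
    (T : Matrix (Fin s) (Fin s) ℝ) (A : Matrix (Fin s) (Fin K) ℝ)
    (hTpos : ∀ i j, 0 ≤ T i j) (hApos : ∀ i k, 0 ≤ A i k)
    (hTrow : ∀ i, ∑ j, T i j = 1) (hArow : ∀ i, ∑ k, A i k = 1) :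
    ((bigM T A s).rank = s →
      ∀ f : Fin s → ℝ, ∃ gi : Fin s → Fin K → ℝ,
        ∀ x : Fin s,
          f x = ∑ y : Fin s → Fin K, (∑ i, gi i (y i)) * jointObs hs T A x y) ∧
    (∀ m : ℕ, s ≤ m → (bigM T A m).rank = (bigM T A s).rank) :=
  finite_state_observability_general hs T A hTrow hArow
end

section
/- Let 𝒳, 𝒵 be compact subsets of ℝ, let a, b : 𝒵 → ℝ be measurable with E[a(Z)^k b(Z)^{i−k}] finite for all relevant i, k, and consider the observation map h(x,z) = a(z)x + b(z). Then the operator S(g)(x) = ∫ g(h(x,z)) Q(dz) maps polynomials of degree n to polynomials of degree at most n, and the linear map on coefficient vectors is upper triangular with diagonal entries E[a(Z)^k], k = 0,…,n. Consequently, if E[a(Z)^k] ≠ 0 for all k ≤ n, then every polynomial f of degree n equals S(g) for some polynomial g of degree n. -/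
/-!
Expanding `(a x + b)^j` binomially and integrating term by term shows that `S` sends the
polynomial with coefficients `c` to the polynomial with coefficients `N c`, where
`N(i,j) = C(j,i) E[a^i b^(j-i)]` vanishes for `j < i`. So `N` is upper triangular with diagonal
`E[a^i]`, hence invertible when these moments are nonzero, and `f = S(g)` for the `g` whose
coefficient vector is `N⁻¹` applied to that of `f`.
-/

open MeasureTheory Polynomial Finset

/-- Stated so that the factor `α ^ i * β ^ (j - i)` stands alone, ready for term-by-term
integration in `α, β`. -/
theorem Polynomial.eval_mul_add_eq_sum {R : Type*} [CommSemiring R] {g : R[X]} {n : ℕ}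
    (hg : g.natDegree ≤ n) (α β x : R) :
    g.eval (α * x + β) = ∑ j ∈ range (n + 1), ∑ i ∈ range (n + 1),
      (if i ≤ j then (j.choose i : R) * g.coeff j * x ^ i else 0) * (α ^ i * β ^ (j - i)) := by
  rw [eval_eq_sum_range' (Nat.lt_succ_of_le hg)]
  refine sum_congr rfl fun j hj => ?_
  have hjn : j + 1 ≤ n + 1 := mem_range.1 hj
  rw [add_pow, mul_sum, ← sum_range_add_sum_Ico _ hjn, sum_eq_zero (s := Ico _ _), add_zero]
  · refine sum_congr rfl fun i hi => ?_
    rw [if_pos (Nat.lt_succ_iff.1 (mem_range.1 hi))]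
    ring
  · intro i hi
    rw [if_neg (by simp only [mem_Ico] at hi; omega), zero_mul]

noncomputable section AffineChannel

variable {𝒵 : Type*} [MeasurableSpace 𝒵] (Q : Measure 𝒵) (a b : 𝒵 → ℝ)

def affineChannelCoeff (i j : ℕ) : ℝ :=
  if i ≤ j then (j.choose i : ℝ) * ∫ z, a z ^ i * b z ^ (j - i) ∂Q else 0

theorem affineChannelCoeff_of_lt {i j : ℕ} (h : j < i) : affineChannelCoeff Q a b i j = 0 :=
  if_neg h.not_ge

theorem affineChannelCoeff_self (i : ℕ) : affineChannelCoeff Q a b i i = ∫ z, a z ^ i ∂Q := by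
  simp [affineChannelCoeff]

theorem sum_affineChannelCoeff_mul_eq_zero {n i : ℕ} (hi : n < i) (c : ℕ → ℝ) :
    ∑ j ∈ range (n + 1), affineChannelCoeff Q a b i j * c j = 0 :=
  sum_eq_zero fun j hj => by
    rw [affineChannelCoeff_of_lt Q a b (by simp only [mem_range] at hj; omega), zero_mul]

/-- `S(g)` in closed form when `g.natDegree ≤ n`; for larger `g` it only sees the first
`n + 1` coefficients. -/
def affineChannelImage (n : ℕ) (g : ℝ[X]) : ℝ[X] :=
  ∑ i ∈ range (n + 1), monomial i (∑ j ∈ range (n + 1), affineChannelCoeff Q a b i j * g.coeff j)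

theorem natDegree_affineChannelImage_le (n : ℕ) (g : ℝ[X]) :
    (affineChannelImage Q a b n g).natDegree ≤ n :=
  natDegree_sum_le_of_forall_le _ _ fun _ hi =>
    (natDegree_monomial_le _).trans (Nat.lt_succ_iff.1 (mem_range.1 hi))

theorem coeff_affineChannelImage (n : ℕ) (g : ℝ[X]) (i : ℕ) :
    (affineChannelImage Q a b n g).coeff i =
      ∑ j ∈ range (n + 1), affineChannelCoeff Q a b i j * g.coeff j := by
  rw [affineChannelImage, finsetSum_coeff]
  simp only [coeff_monomial]
  rw [sum_ite_eq']
  split_ifs with hi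
  · rfl
  · exact (sum_affineChannelCoeff_mul_eq_zero Q a b (by simpa using hi) _).symm

theorem integral_eval_mul_add (hint : ∀ k m : ℕ, Integrable (fun z => a z ^ k * b z ^ m) Q)
    {n : ℕ} {g : ℝ[X]} (hg : g.natDegree ≤ n) (x : ℝ) :
    ∫ z, g.eval (a z * x + b z) ∂Q = (affineChannelImage Q a b n g).eval x := by
  have hterm : ∀ j i : ℕ, Integrable (fun z =>
      (if i ≤ j then (j.choose i : ℝ) * g.coeff j * x ^ i else 0) * (a z ^ i * b z ^ (j - i))) Q :=
    fun j i => (hint i (j - i)).const_mul _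
  simp_rw [eval_mul_add_eq_sum hg]
  rw [integral_finsetSum _ fun j _ => integrable_finsetSum _ fun i _ => hterm j i]
  simp_rw [integral_finsetSum _ fun i _ => hterm _ i, integral_const_mul]
  rw [sum_comm, affineChannelImage, eval_finsetSum]
  refine sum_congr rfl fun i _ => ?_
  rw [eval_monomial, sum_mul]
  refine sum_congr rfl fun j _ => ?_
  unfold affineChannelCoeff
  split_ifs <;> ring

def affineChannelMatrix (n : ℕ) : Matrix (Fin n) (Fin n) ℝ :=
  Matrix.of fun i j => affineChannelCoeff Q a b i j

theorem isUnit_affineChannelMatrix {n : ℕ} (hmom : ∀ k < n, ∫ z, a z ^ k ∂Q ≠ 0) :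
    IsUnit (affineChannelMatrix Q a b n) := by
  have htri : (affineChannelMatrix Q a b n).IsUpperTriangular := fun i j hji =>
    affineChannelCoeff_of_lt Q a b hji
  rw [Matrix.isUnit_iff_isUnit_det, Matrix.det_of_isUpperTriangular htri, isUnit_iff_ne_zero]
  refine prod_ne_zero_iff.2 fun i _ => ?_
  rw [affineChannelMatrix, Matrix.of_apply, affineChannelCoeff_self]
  exact hmom i i.isLt

theorem exists_affineChannelImage_eq {n : ℕ} (hmom : ∀ k ≤ n, ∫ z, a z ^ k ∂Q ≠ 0)
    {f : ℝ[X]} (hf : f.natDegree ≤ n) :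
    ∃ g : ℝ[X], g.natDegree ≤ n ∧ affineChannelImage Q a b n g = f := by
  obtain ⟨c, hc⟩ := Matrix.mulVec_surjective_iff_isUnit.2
    (isUnit_affineChannelMatrix Q a b fun k hk => hmom k (Nat.lt_succ_iff.1 hk))
    fun i => f.coeff i
  set g : ℝ[X] := ∑ j : Fin (n + 1), monomial j (c j)
  have hg : ∀ j : Fin (n + 1), g.coeff j = c j := by
    intro j
    simp [g, coeff_monomial, Fin.val_inj]
  refine ⟨g, natDegree_sum_le_of_forall_le _ _ fun j _ =>
    (natDegree_monomial_le _).trans (Nat.lt_succ_iff.1 j.isLt), ?_⟩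
  ext i
  rw [coeff_affineChannelImage]
  by_cases hi : i ≤ n
  · rw [← Fin.sum_univ_eq_sum_range (fun j => affineChannelCoeff Q a b i j * g.coeff j)]
    simp_rw [hg]
    exact congrFun hc ⟨i, Nat.lt_succ_of_le hi⟩
  · rw [sum_affineChannelCoeff_mul_eq_zero Q a b (not_le.1 hi),
      coeff_eq_zero_of_natDegree_lt (hf.trans_lt (not_le.1 hi))]

end AffineChannel

theorem affine_channel_polynomial_observability_general
    {𝒵 : Type*} [MeasurableSpace 𝒵] (Q : Measure 𝒵)
    (a b : 𝒵 → ℝ)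
    (hint : ∀ k m : ℕ, Integrable (fun z => a z ^ k * b z ^ m) Q)
    (n : ℕ) :
    (∀ g : Polynomial ℝ, g.natDegree ≤ n →
      ∃ p : Polynomial ℝ, p.natDegree ≤ n ∧
        (∀ x : ℝ, (∫ z, g.eval (a z * x + b z) ∂Q) = p.eval x) ∧
        (∀ i : ℕ, p.coeff i =
          ∑ j ∈ Finset.range (n + 1),
            (if i ≤ j then (j.choose i : ℝ) * ∫ z, a z ^ i * b z ^ (j - i) ∂Q else 0)
              * g.coeff j)) ∧
    ((∀ k ≤ n, (∫ z, a z ^ k ∂Q) ≠ 0) →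
      ∀ f : Polynomial ℝ, f.natDegree ≤ n →
        ∃ g : Polynomial ℝ, g.natDegree ≤ n ∧
          ∀ x : ℝ, f.eval x = ∫ z, g.eval (a z * x + b z) ∂Q) := by
  refine ⟨fun g hg => ⟨affineChannelImage Q a b n g, natDegree_affineChannelImage_le Q a b n g,
    integral_eval_mul_add Q a b hint hg, coeff_affineChannelImage Q a b n g⟩, ?_⟩
  intro hmom f hf
  obtain ⟨g, hg, rfl⟩ := exists_affineChannelImage_eq Q a b hmom hf
  exact ⟨g, hg, fun x => (integral_eval_mul_add Q a b hint hg x).symm⟩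

/-- For the affine observation channel `h(x,z) = a(z)x + b(z)` with noise law
`Q` having all required moments, the operator `S(g)(x) = ∫ g(h(x,z)) Q(dz)` maps polynomials of
degree ≤ n to polynomials of degree ≤ n; on coefficients it acts by an upper triangular matrix
with entries `N(j,i) = C(j,i) E[a(Z)^i b(Z)^{j-i}]` (diagonal entries `E[a(Z)^i]`).
Consequently, if `E[a(Z)^k] ≠ 0` for all `k ≤ n`, every polynomial `f` of degree ≤ n equals
`S(g)` for some polynomial `g` of degree ≤ n. -/
theorem affine_channel_polynomial_observability
    {𝒵 : Type*} [MeasurableSpace 𝒵] (Q : Measure 𝒵) [IsProbabilityMeasure Q]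
    (a b : 𝒵 → ℝ) (ha : Measurable a) (hb : Measurable b)
    (hint : ∀ k m : ℕ, Integrable (fun z => a z ^ k * b z ^ m) Q)
    (n : ℕ) :
    (∀ g : Polynomial ℝ, g.natDegree ≤ n →
      ∃ p : Polynomial ℝ, p.natDegree ≤ n ∧
        (∀ x : ℝ, (∫ z, g.eval (a z * x + b z) ∂Q) = p.eval x) ∧
        (∀ i : ℕ, p.coeff i =
          ∑ j ∈ Finset.range (n + 1),
            (if i ≤ j then (j.choose i : ℝ) * ∫ z, a z ^ i * b z ^ (j - i) ∂Q else 0)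
              * g.coeff j)) ∧
    ((∀ k ≤ n, (∫ z, a z ^ k ∂Q) ≠ 0) →
      ∀ f : Polynomial ℝ, f.natDegree ≤ n →
        ∃ g : Polynomial ℝ, g.natDegree ≤ n ∧
          ∀ x : ℝ, f.eval x = ∫ z, g.eval (a z * x + b z) ∂Q) :=
  affine_channel_polynomial_observability_general Q a b hint n
end

section
/- Consider the observation channel h(x,z) = x·1_{x>z} + z·1_{x≤z} on a compact state space 𝒳 ⊂ ℝ with noise law Q admitting a Lebesgue density q, and suppose Q(Z < x_min) ≥ ε > 0 where x_min is a lower bound of 𝒳. Then for every continuously differentiable f on 𝒳, the function g(x) = c + ∫_{−∞}^x 1_𝒳(u) f'(u)/Q(Z ≤ u) du (with c chosen to match a boundary value) is bounded on 𝒳 and satisfies ∫_𝒵 g(h(x,z)) Q(dz) = f(x) for all x ∈ 𝒳. -/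
/-!
Since `h(x, z) = max x z`, for `g = c + ∫_A^· φ` with `φ` integrable, Fubini gives
`∫ g (max x z) dQ(z) = g x + ∫_{u > x} Q(Z > u) φ u du`. As `x` moves from `A`, the right
side changes by `∫_A^x Q(Z ≤ u) φ u du`, which is `f x - f A` when `φ = f' / Q(Z ≤ ·)` on
`[A, B]`: this is the integrated form of the ODE `f' = g' · Q(Z ≤ ·)`. The bound
`Q(Z < x_min) ≥ ε > 0` keeps `Q(Z ≤ ·)` positive on `[A, B]`, so `φ` is integrable and `g` is
bounded.
-/

open MeasureTheory

/-- The function `g(y) = c + ∫_{-∞}^y 1_𝒳(u) f'(u)/Q(Z ≤ u) du` from the indicator-channel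
construction, for the state space `𝒳 = [A, B]`. -/
noncomputable def gfun (A B : ℝ) (f : ℝ → ℝ) (Q : Measure ℝ) (c y : ℝ) : ℝ :=
  c + ∫ u in A..y, Set.indicator (Set.Icc A B)
    (fun u => deriv f u / (Q {z | z ≤ u}).toReal) u

open Set

section PrimitiveAtMax

variable {Q : Measure ℝ} {φ : ℝ → ℝ}

-- The open interval makes the inner `Q`-integral in `integral_integral_Ioo` equal to `Q(Z > u)`,
-- the complement of the distribution function.
theorem intervalIntegral_max_eq_add_integral_Ioo (hφ : Integrable φ) (a x z : ℝ) :
    ∫ u in a..max x z, φ u = (∫ u in a..x, φ u) + ∫ u in Ioo x z, φ u := by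
  have hIoo : Ioo x (max x z) = Ioo x z := by
    ext u
    simp only [mem_Ioo, lt_max_iff]
    grind
  rw [← intervalIntegral.integral_add_adjacent_intervals hφ.intervalIntegrable
      hφ.intervalIntegrable, intervalIntegral.integral_of_le (le_max_left x z),
    integral_Ioc_eq_integral_Ioo, hIoo]

theorem integrable_uncurry_indicator_Ioo [IsFiniteMeasure Q] (hφ : Integrable φ) (x : ℝ) :
    Integrable (Function.uncurry fun z u => (Ioo x z).indicator φ u) (Q.prod volume) :=
  (hφ.comp_snd Q).indicator
    ((measurableSet_lt measurable_const measurable_snd).inter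
      (measurableSet_lt measurable_snd measurable_fst))

theorem integral_integral_Ioo [IsFiniteMeasure Q] (hφ : Integrable φ) (x : ℝ) :
    ∫ z, (∫ u in Ioo x z, φ u) ∂Q = ∫ u in Ioi x, Q.real (Ioi u) * φ u := by
  have hinner : ∀ u, ∫ z, (Ioo x z).indicator φ u ∂Q = (Ioi x).indicator
      (fun u => Q.real (Ioi u) * φ u) u := by
    intro u
    by_cases hxu : x < u
    · have : (fun z => (Ioo x z).indicator φ u) = (Ioi u).indicator fun _ => φ u := by
        ext z
        by_cases huz : u < z <;> simp [hxu, huz]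
      rw [this, integral_indicator_const _ measurableSet_Ioi, smul_eq_mul,
        indicator_of_mem (mem_Ioi.2 hxu)]
    · simp [hxu]
  simp_rw [← integral_indicator measurableSet_Ioo]
  rw [integral_integral_swap (integrable_uncurry_indicator_Ioo hφ x)]
  simp_rw [hinner]
  rw [integral_indicator measurableSet_Ioi]

theorem integrable_integral_Ioo [IsFiniteMeasure Q] (hφ : Integrable φ) (x : ℝ) :
    Integrable (fun z => ∫ u in Ioo x z, φ u) Q := by
  simp_rw [← integral_indicator measurableSet_Ioo]
  exact (integrable_uncurry_indicator_Ioo hφ x).integral_prod_left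

theorem integral_const_add_intervalIntegral_max [IsProbabilityMeasure Q] (hφ : Integrable φ)
    (c a x : ℝ) :
    ∫ z, (c + ∫ u in a..max x z, φ u) ∂Q
      = c + (∫ u in a..x, φ u) + ∫ u in Ioi x, Q.real (Ioi u) * φ u := by
  simp_rw [intervalIntegral_max_eq_add_integral_Ioo hφ, ← add_assoc]
  rw [integral_add (integrable_const _) (integrable_integral_Ioo hφ x), integral_const,
    probReal_univ, one_smul, integral_integral_Ioo hφ]

theorem integrable_probReal_Ioi_mul [IsProbabilityMeasure Q] (hφ : Integrable φ) :
    Integrable (fun u => Q.real (Ioi u) * φ u) := by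
  refine hφ.bdd_mul (c := 1) ?_ (ae_of_all _ fun u => ?_)
  · exact (Antitone.measurable fun u v huv =>
      measureReal_mono (Ioi_subset_Ioi huv)).aestronglyMeasurable
  · rw [Real.norm_of_nonneg measureReal_nonneg]
    exact measureReal_le_one

theorem intervalIntegral_add_tail_sub [IsProbabilityMeasure Q] (hφ : Integrable φ) (a x : ℝ) :
    (∫ u in a..x, φ u) + (∫ u in Ioi x, Q.real (Ioi u) * φ u)
        - ∫ u in Ioi a, Q.real (Ioi u) * φ u
      = ∫ u in a..x, Q.real (Iic u) * φ u := by
  have hψ := integrable_probReal_Ioi_mul (Q := Q) hφ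
  calc (∫ u in a..x, φ u) + (∫ u in Ioi x, Q.real (Ioi u) * φ u)
        - ∫ u in Ioi a, Q.real (Ioi u) * φ u
      = (∫ u in a..x, φ u) - ∫ u in a..x, Q.real (Ioi u) * φ u := by
        rw [← intervalIntegral.integral_Ioi_sub_Ioi' hψ.integrableOn hψ.integrableOn]
        ring
    _ = ∫ u in a..x, (φ u - Q.real (Ioi u) * φ u) :=
        (intervalIntegral.integral_sub hφ.intervalIntegrable hψ.intervalIntegrable).symm
    _ = ∫ u in a..x, Q.real (Iic u) * φ u := by
        refine intervalIntegral.integral_congr fun u _ => ?_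
        simp only [← compl_Iic, probReal_compl_eq_one_sub measurableSet_Iic]
        ring

end PrimitiveAtMax

theorem integrableOn_Icc_div_of_monotoneOn {h w : ℝ → ℝ} {a b : ℝ}
    (hh : ContinuousOn h (Icc a b)) (hw : MonotoneOn w (Icc a b)) (hwa : 0 < w a) :
    IntegrableOn (fun u => h u / w u) (Icc a b) := by
  have hpos : ∀ u ∈ Icc a b, 0 < w u := fun u hu =>
    hwa.trans_le (hw ⟨le_rfl, hu.1.trans hu.2⟩ hu hu.1)
  have hinv : AntitoneOn (fun u => (w u)⁻¹) (Icc a b) := fun u hu v hv huv =>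
    inv_anti₀ (hpos u hu) (hw hu hv huv)
  simpa only [div_eq_mul_inv] using
    (hinv.integrableOn_isCompact isCompact_Icc).continuousOn_mul hh isCompact_Icc

theorem norm_intervalIntegral_le_integral_norm {E : Type*} [NormedAddCommGroup E]
    [NormedSpace ℝ E] {f : ℝ → E} (hf : Integrable f) (a b : ℝ) :
    ‖∫ u in a..b, f u‖ ≤ ∫ u, ‖f u‖ :=
  (intervalIntegral.norm_integral_le_integral_norm_uIoc).trans
    (setIntegral_le_integral hf.norm (ae_of_all _ fun _ => norm_nonneg _))

theorem indicator_channel_observable_general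
    (A B : ℝ)
    (Q : Measure ℝ) [IsProbabilityMeasure Q]
    (xm : ℝ) (hxm : xm ≤ A)
    (ε : ℝ) (hε : 0 < ε) (hQxm : ε ≤ (Q {z | z < xm}).toReal)
    (f : ℝ → ℝ) (hf : ContDiff ℝ 1 f) :
    ∃ c : ℝ,
      (∃ M : ℝ, ∀ x ∈ Set.Icc A B, |gfun A B f Q c x| ≤ M) ∧
      ∀ x ∈ Set.Icc A B,
        (∫ z, gfun A B f Q c (if z < x then x else z) ∂Q) = f x := by
  set φ := (Icc A B).indicator fun u => deriv f u / Q.real (Iic u)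
  have hg : ∀ c y, gfun A B f Q c y = c + ∫ u in A..y, φ u := fun _ _ => rfl
  have hcdf_pos : ∀ u, A ≤ u → 0 < Q.real (Iic u) := fun u hu =>
    (hε.trans_le hQxm).trans_le (measureReal_mono fun z hz => (le_of_lt hz).trans (hxm.trans hu))
  have hf' : Continuous (deriv f) := hf.continuous_deriv le_rfl
  have hφ : Integrable φ :=
    (integrableOn_Icc_div_of_monotoneOn hf'.continuousOn
      (fun u _ v _ huv => measureReal_mono (Iic_subset_Iic.2 huv))
      (hcdf_pos A le_rfl)).integrable_indicator measurableSet_Icc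
  set c := f A - ∫ u in Ioi A, Q.real (Ioi u) * φ u
  refine ⟨c, ⟨|c| + ∫ u, ‖φ u‖, fun x _ => ?_⟩, fun x hx => ?_⟩
  · rw [hg]
    exact (abs_add_le _ _).trans
      (add_le_add_right (norm_intervalIntegral_le_integral_norm hφ A x) _)
  have hderiv : ∫ u in A..x, Q.real (Iic u) * φ u = ∫ u in A..x, deriv f u := by
    refine intervalIntegral.integral_congr fun u hu => ?_
    rw [uIcc_of_le hx.1] at hu
    have huAB : u ∈ Icc A B := ⟨hu.1, hu.2.trans hx.2⟩
    simp only [φ, indicator_of_mem huAB]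
    exact mul_div_cancel₀ _ (hcdf_pos u hu.1).ne'
  simp_rw [← max_def_lt, max_comm _ x, hg, integral_const_add_intervalIntegral_max hφ]
  calc c + (∫ u in A..x, φ u) + ∫ u in Ioi x, Q.real (Ioi u) * φ u
      = f A + ((∫ u in A..x, φ u) + (∫ u in Ioi x, Q.real (Ioi u) * φ u)
          - ∫ u in Ioi A, Q.real (Ioi u) * φ u) := by ring
    _ = f x := by
      rw [intervalIntegral_add_tail_sub hφ, hderiv, intervalIntegral.integral_deriv_eq_sub
        (fun u _ => (hf.differentiable one_ne_zero).differentiableAt) (hf'.intervalIntegrable _ _)]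
      ring

/-- For the channel `h(x,z) = x·1_{x>z} + z·1_{x≤z}` on the compact state
space `𝒳 = [A,B]`, with noise law `Q` having a Lebesgue density `q` and satisfying
`Q(Z < x_min) ≥ ε > 0` for a lower bound `x_min` of `𝒳`, and for any continuously
differentiable `f`, the function `g(y) = c + ∫_{-∞}^y 1_𝒳(u) f'(u)/Q(Z ≤ u) du` (for a suitable
constant `c`) is bounded on `𝒳` and satisfies `∫ g(h(x,z)) Q(dz) = f(x)` for all `x ∈ 𝒳`. -/
theorem indicator_channel_observable
    (A B : ℝ) (hAB : A ≤ B)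
    (q : ℝ → ℝ) (hq0 : ∀ z, 0 ≤ q z) (hqm : Measurable q)
    (Q : Measure ℝ) [IsProbabilityMeasure Q]
    (hQ : Q = MeasureTheory.volume.withDensity (fun z => ENNReal.ofReal (q z)))
    (xm : ℝ) (hxm : xm ≤ A)
    (ε : ℝ) (hε : 0 < ε) (hQxm : ε ≤ (Q {z | z < xm}).toReal)
    (f : ℝ → ℝ) (hf : ContDiff ℝ 1 f) :
    ∃ c : ℝ,
      (∃ M : ℝ, ∀ x ∈ Set.Icc A B, |gfun A B f Q c x| ≤ M) ∧
      ∀ x ∈ Set.Icc A B,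
        (∫ z, gfun A B f Q c (if z < x then x else z) ∂Q) = f x :=
  indicator_channel_observable_general A B Q xm hxm ε hε hQxm f hf
end

section
/- Let M > 0 be an integer, a ∈ ℝ, and let f : ℝ → ℝ be bounded. Define g : ℝ → ℝ by g(y) = 0 for y < −M+a+1, g(y) = 2f(y−1) for y ∈ [−M+a+1, −M+a+3), g(y) = 2f(y−1) − g(y−2) for y ∈ [−M+a+3, M+a+1], and g(y) = −g(y−2) for y > M+a+1. Then ‖g‖_∞ ≤ 4M‖f‖_∞, and the two-point average (g(x+1)+g(x−1))/2 equals f(x) for all x ∈ [−M+a, M+a] and equals 0 for all x outside [−M+a, M+a]. -/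
/-!
On `[−M+a+1, M+a+1]` the two defining cases merge into the single recursion
`g y = 2 f(y−1) − g(y−2)` (on the first window `g(y−2) = 0`). Evaluated at `y = x+1` this is
exactly the averaging identity on `[−M+a, M+a]`; to the left both values of `g` vanish, and to
the right `g(x+1) = −g(x−1)`. Each step of the recursion adds at most `2‖f‖_∞` to `|g|`, and
`M+1` steps reach `M+a+1`, so `|g| ≤ 2(M+1)‖f‖_∞ ≤ 4M‖f‖_∞` there; beyond it `|g|` is
`2`-periodic.
-/

theorem le_natCast_mul_of_le_add_comp_sub {ψ : ℝ → ℝ} {L R s B : ℝ} (hs : 0 ≤ s) (hB : 0 ≤ B)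
    (h_left : ∀ y < L, ψ y ≤ 0) (h_step : ∀ y, L ≤ y → y ≤ R → ψ y ≤ B + ψ (y - s)) :
    ∀ n : ℕ, ∀ y, y < L + n * s → y ≤ R → ψ y ≤ n * B := by
  intro n
  induction n with
  | zero =>
    intro y hy _
    simpa using h_left y (by simpa using hy)
  | succ n ih =>
    intro y hy hyR
    push_cast at hy ⊢
    rcases lt_or_ge y L with hyL | hyL
    · exact (h_left y hyL).trans (by positivity)
    · calc ψ y ≤ B + ψ (y - s) := h_step y hyL hyR
        _ ≤ B + n * B := by gcongr; exact ih _ (by linarith) (by linarith)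
        _ = (n + 1) * B := by ring

theorem le_of_le_on_Iic_of_le_comp_sub {ψ : ℝ → ℝ} {R s K : ℝ} (hs : 0 < s)
    (h_Iic : ∀ y ≤ R, ψ y ≤ K) (h_step : ∀ y, R < y → ψ y ≤ ψ (y - s)) (y : ℝ) : ψ y ≤ K := by
  have h_strip : ∀ n : ℕ, ∀ y ≤ R + n * s, ψ y ≤ K := by
    intro n
    induction n with
    | zero => simpa using h_Iic
    | succ n ih =>
      intro y hy
      push_cast at hy
      rcases le_or_gt y (R + n * s) with hyn | hyn
      · exact ih y hyn
      · have hRy : R < y := by nlinarith [n.cast_nonneg (α := ℝ)]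
        exact (h_step y hRy).trans (ih _ (by linarith))
  obtain ⟨n, hn⟩ := exists_nat_ge ((y - R) / s)
  exact h_strip n y (by rw [div_le_iff₀ hs] at hn; linarith)

/-- The telescoping construction for the channel `Y = X ± 1` (each with
probability 1/2): for the function `g` defined by the recursion
`g(y) = 0` for `y < −M+a+1`, `g(y) = 2f(y−1)` on `[−M+a+1, −M+a+3)`,
`g(y) = 2f(y−1) − g(y−2)` on `[−M+a+3, M+a+1]`, and `g(y) = −g(y−2)` for `y > M+a+1`,
one has `‖g‖_∞ ≤ 4M‖f‖_∞`, and the two-point average `(g(x+1)+g(x−1))/2` equals `f(x)` on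
`[−M+a, M+a]` and equals `0` outside `[−M+a, M+a]`. -/
theorem telescoping_local_observability
    (M : ℕ) (hM : 0 < M) (a : ℝ) (f : ℝ → ℝ)
    (C : ℝ) (hf : ∀ x, |f x| ≤ C)
    (g : ℝ → ℝ)
    (h0 : ∀ y : ℝ, y < -(M : ℝ) + a + 1 → g y = 0)
    (h1 : ∀ y : ℝ, -(M : ℝ) + a + 1 ≤ y → y < -(M : ℝ) + a + 3 → g y = 2 * f (y - 1))
    (h2 : ∀ y : ℝ, -(M : ℝ) + a + 3 ≤ y → y ≤ (M : ℝ) + a + 1 →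
      g y = 2 * f (y - 1) - g (y - 2))
    (h3 : ∀ y : ℝ, (M : ℝ) + a + 1 < y → g y = -g (y - 2)) :
    (∀ y : ℝ, |g y| ≤ 4 * M * C) ∧
    (∀ x : ℝ, -(M : ℝ) + a ≤ x → x ≤ (M : ℝ) + a → (g (x + 1) + g (x - 1)) / 2 = f x) ∧
    (∀ x : ℝ, (x < -(M : ℝ) + a ∨ (M : ℝ) + a < x) → (g (x + 1) + g (x - 1)) / 2 = 0) := by
  have h_rec : ∀ y, -(M : ℝ) + a + 1 ≤ y → y ≤ M + a + 1 → g y = 2 * f (y - 1) - g (y - 2) := by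
    intro y hyL hyR
    rcases lt_or_ge y (-(M : ℝ) + a + 3) with hy | hy
    · rw [h1 y hyL hy, h0 (y - 2) (by linarith), sub_zero]
    · exact h2 y hy hyR
  have hC : 0 ≤ C := (abs_nonneg _).trans (hf 0)
  have h_step : ∀ y, -(M : ℝ) + a + 1 ≤ y → y ≤ M + a + 1 → |g y| ≤ 2 * C + |g (y - 2)| := by
    intro y hyL hyR
    rw [h_rec y hyL hyR]
    calc |2 * f (y - 1) - g (y - 2)| ≤ |2 * f (y - 1)| + |g (y - 2)| := abs_sub _ _
      _ ≤ 2 * C + |g (y - 2)| := by rw [abs_mul, abs_two]; linarith [hf (y - 1)]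
  have h_ramp : ∀ y ≤ (M : ℝ) + a + 1, |g y| ≤ 4 * M * C := by
    intro y hy
    have h_growth := le_natCast_mul_of_le_add_comp_sub zero_le_two (by positivity)
      (fun z hz => by rw [h0 z hz, abs_zero]) h_step (M + 1) y (by push_cast; linarith) hy
    have hM1 : (1 : ℝ) ≤ M := by exact_mod_cast hM
    push_cast at h_growth
    nlinarith
  refine ⟨le_of_le_on_Iic_of_le_comp_sub two_pos h_ramp
    (fun y hy => by rw [h3 y hy, abs_neg]), ?_, ?_⟩
  · intro x hxL hxR
    rw [h_rec (x + 1) (by linarith) (by linarith)]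
    ring_nf
  · rintro x (hx | hx)
    · rw [h0 (x + 1) (by linarith), h0 (x - 1) (by linarith)]
      norm_num
    · rw [h3 (x + 1) (by linarith)]
      ring_nf
end
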